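/- Every subspace W of a colored vector space V admits a colored complement: there exists a colored subspace U ⊆ V with V = U ⊕ W. -/

import Mathlib

open Module Submodule

/-!
The homogeneous vectors `⋃ i, Vᵢ` span `V`. Choosing among them a family that is linearly
independent modulo `W` and spans `V` modulo `W` gives a complement `U` of `W` spanned by
homogeneous vectors. Such a `U` is the sum of the `U ⊓ Vᵢ`, and this sum is direct because the
`Vᵢ` are independent, so `dim U = ∑ dim (U ⊓ Vᵢ)`.
-/

theorem Submodule.exists_subset_isCompl_span {K V : Type*} [DivisionRing K] [AddCommGroup V]
    [Module K V] (W : Submodule K V) {t : Set V} (ht : span K t = ⊤) :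
    ∃ s ⊆ t, IsCompl (span K s) W := by
  obtain ⟨s, hst, -, hts, hs⟩ :=
    exists_linearIndepOn_extension (v := W.mkQ) (linearIndepOn_empty K _) (Set.empty_subset t)
  refine ⟨s, hst, ⟨?_, ?_⟩⟩
  · simpa using Submodule.range_ker_disjoint hs
  · rw [codisjoint_iff, sup_comm, ← map_mkQ_eq_top, map_span, eq_top_iff, ← W.range_mkQ,
      LinearMap.range_eq_map, ← ht, map_span]
    exact span_le.2 hts

theorem iSupIndep.finrank_iSup {K V ι : Type*} [DivisionRing K] [AddCommGroup V] [Module K V]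
    [Fintype ι] {p : ι → Submodule K V} [∀ i, FiniteDimensional K (p i)] (hp : iSupIndep p) :
    finrank K ↥(⨆ i, p i) = ∑ i, finrank K ↥(p i) := by
  classical
  rw [← DirectSum.range_coeLinearMap,
    LinearMap.finrank_range_of_inj (f := DirectSum.coeLinearMap p) hp.dfinsupp_lsum_injective,
    Module.finrank_directSum]

theorem Submodule.span_eq_iSup_inf_of_subset_iUnion {R M ι : Type*} [Semiring R] [AddCommMonoid M]
    [Module R M] {p : ι → Submodule R M} {s : Set M} (hs : s ⊆ ⋃ i, (p i : Set M)) :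
    span R s = ⨆ i, span R s ⊓ p i := by
  refine le_antisymm (span_le.2 fun v hv => ?_) (iSup_le fun i => inf_le_left)
  obtain ⟨i, hvi⟩ := Set.mem_iUnion.1 (hs hv)
  exact mem_iSup_of_mem i ⟨subset_span hv, hvi⟩

/-- Every subspace `W` of a colored vector space `V` admits a colored
complement: a colored subspace `U` with `V = U ⊕ W`. -/
theorem exists_colored_complement
    {𝕜 V : Type*} [Field 𝕜] [AddCommGroup V] [Module 𝕜 V] [FiniteDimensional 𝕜 V]
    {n : ℕ} (Vc : Fin n → Submodule 𝕜 V) (hV : DirectSum.IsInternal Vc)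
    (W : Submodule 𝕜 V) :
    ∃ U : Submodule 𝕜 V,
      (finrank 𝕜 ↥U = ∑ i, finrank 𝕜 ↥(U ⊓ Vc i)) ∧ IsCompl U W := by
  have hspan : span 𝕜 (⋃ i, (Vc i : Set V)) = ⊤ := by
    rw [← iSup_eq_span]
    exact hV.submodule_iSup_eq_top
  obtain ⟨s, hs, hcompl⟩ := W.exists_subset_isCompl_span hspan
  refine ⟨span 𝕜 s, ?_, hcompl⟩
  calc finrank 𝕜 ↥(span 𝕜 s) = finrank 𝕜 ↥(⨆ i, span 𝕜 s ⊓ Vc i) := by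
        rw [← span_eq_iSup_inf_of_subset_iUnion hs]
    _ = ∑ i, finrank 𝕜 ↥(span 𝕜 s ⊓ Vc i) :=
        (hV.submodule_iSupIndep.mono fun i => inf_le_right).finrank_iSup
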